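/- arXiv:2102.00954 — 2 statements merged into one kernel-verified Lean document; each statement's English description precedes it below -/
import Mathlib

section
/- Almost surely, a parabolic path π from x ≥ 0 to z across the parabolic Airy line ensemble 𝓑 is a geodesic if and only if its discrepancy D_π(y) = ‖π|_{[y,z]}‖_𝓑 − 𝓑[(y,π(y)) → (z,1)] equals 0 for all y < z; moreover D_π is nondecreasing in y, so the liminf in the definition of ‖π‖_𝓑 is a limit. -/
open Filter

namespace ParabolicLPP

/-- A parabolic path from `x ≥ 0` to `z` across a line ensemble: a nonincreasing,
cadlag, `ℕ`-valued function on `(-∞, z]` ending on line `1`, with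
`π(y)/(2y²) → x` as `y → −∞`. -/
structure IsParabolicPath (x z : ℝ) (π : ℝ → ℕ) : Prop where
  one_le : ∀ y : ℝ, y ≤ z → 1 ≤ π y
  anti : ∀ y y' : ℝ, y ≤ y' → y' ≤ z → π y' ≤ π y
  cadlag : ∀ y : ℝ, y < z → ∃ ε > 0, ∀ u : ℝ, y ≤ u → u ≤ y + ε → u ≤ z → π u = π y
  ends : π z = 1
  direction : Tendsto (fun y : ℝ => (π y : ℝ) / (2 * y ^ 2)) atBot (nhds x)

/-- The time at which the restriction of `π` to `[y, z]` jumps below line `i`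
(with the conventions of finite last passage percolation: the value for `i ≤ 1` is `z`
and the value for `i > π y` is `y`). -/
noncomputable def jumpTime (π : ℝ → ℕ) (y z : ℝ) (i : ℕ) : ℝ :=
  if i ≤ 1 then z else if π y < i then y else sInf {u : ℝ | y ≤ u ∧ u ≤ z ∧ π u < i}

/-- The length `‖π|_{[y,z]}‖_𝓑` of the restriction of `π` to `[y, z]` across the
ensemble `B`. -/
noncomputable def restLen (B : ℕ → ℝ → ℝ) (π : ℝ → ℕ) (y z : ℝ) : ℝ :=
  ∑ i ∈ Finset.Icc 1 (π y), (B i (jumpTime π y z i) - B i (jumpTime π y z (i + 1)))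

/-- The finite last passage value `𝓑[(y, n) → (z, 1)]` across the lines `n, …, 1` of
`B`, in jump-time coordinates. -/
noncomputable def finLPP (B : ℕ → ℝ → ℝ) (n : ℕ) (y z : ℝ) : ℝ :=
  sSup {S : ℝ | ∃ tt : ℕ → ℝ,
    (∀ a b : ℕ, 1 ≤ a → a ≤ b → b ≤ n + 1 → tt b ≤ tt a) ∧
    tt (n + 1) = y ∧ tt 1 = z ∧
    S = ∑ i ∈ Finset.Icc 1 n, (B i (tt i) - B i (tt (i + 1)))}

/-- The discrepancy of `π` at `y`:
`D_π(y) = ‖π|_{[y,z]}‖_𝓑 − 𝓑[(y, π(y)) → (z, 1)]`. -/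
noncomputable def disc (B : ℕ → ℝ → ℝ) (π : ℝ → ℕ) (z y : ℝ) : ℝ :=
  restLen B π y z - finLPP B (π y) y z

/-- The length of a parabolic path from `x` to `z`:
`‖π‖_𝓑 = 𝓢(x, z) + liminf_{y → −∞} D_π(y)`, valued in the extended reals,
where `S` is the half Airy sheet coupled to `B`. -/
noncomputable def parLen (B : ℕ → ℝ → ℝ) (S : ℝ → ℝ → ℝ) (x z : ℝ) (π : ℝ → ℕ) : EReal :=
  (S x z : EReal) + Filter.liminf (fun y : ℝ => ((disc B π z y : ℝ) : EReal)) atBot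

/-- A geodesic from `x` to `z`: a parabolic path of finite length which is maximal
among all parabolic paths from `x` to `z`. -/
def IsGeodesic (B : ℕ → ℝ → ℝ) (S : ℝ → ℝ → ℝ) (x z : ℝ) (π : ℝ → ℕ) : Prop :=
  IsParabolicPath x z π ∧ parLen B S x z π ≠ ⊥ ∧ parLen B S x z π ≠ ⊤ ∧
    ∀ τ : ℝ → ℕ, IsParabolicPath x z τ → parLen B S x z τ ≤ parLen B S x z π

section Jump

variable (π : ℝ → ℕ) (y z : ℝ)

lemma jump_one : jumpTime π y z 1 = z := by simp [jumpTime]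

lemma jump_gt {i : ℕ} (hi : 2 ≤ i) (h : π y < i) : jumpTime π y z i = y := by
  have h1 : ¬ i ≤ 1 := by omega
  simp only [jumpTime, if_neg h1, if_pos h]

lemma jump_mem (hyz : y ≤ z) (hz : π z = 1) (i : ℕ) :
    y ≤ jumpTime π y z i ∧ jumpTime π y z i ≤ z := by
  unfold jumpTime
  split_ifs with h1 h2
  · exact ⟨hyz, le_rfl⟩
  · exact ⟨le_rfl, hyz⟩
  · have hzmem : z ∈ {u : ℝ | y ≤ u ∧ u ≤ z ∧ π u < i} := ⟨hyz, le_rfl, by omega⟩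
    have hbdd : BddBelow {u : ℝ | y ≤ u ∧ u ≤ z ∧ π u < i} := ⟨y, fun u hu => hu.1⟩
    exact ⟨le_csInf ⟨z, hzmem⟩ fun u hu => hu.1, csInf_le hbdd hzmem⟩

lemma jump_anti (hyz : y ≤ z) (hz : π z = 1) {a b : ℕ} (hab : a ≤ b) :
    jumpTime π y z b ≤ jumpTime π y z a := by
  by_cases ha1 : a ≤ 1
  · have ha : jumpTime π y z a = z := by simp [jumpTime, ha1]
    rw [ha]; exact (jump_mem π y z hyz hz b).2
  · have ha2 : 2 ≤ a := by omega
    have hb2 : 2 ≤ b := by omega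
    by_cases hpa : π y < a
    · rw [jump_gt π y z ha2 hpa, jump_gt π y z hb2 (by omega)]
    · by_cases hpb : π y < b
      · rw [jump_gt π y z hb2 hpb]
        exact (jump_mem π y z hyz hz a).1
      · have hb1 : ¬ b ≤ 1 := by omega
        simp only [jumpTime, if_neg hb1, if_neg hpb, if_neg ha1, if_neg hpa]
        refine csInf_le_csInf ⟨y, fun u hu => hu.1⟩ ⟨z, hyz, le_rfl, by omega⟩ ?_
        intro u hu; exact ⟨hu.1, hu.2.1, lt_of_lt_of_le hu.2.2 hab⟩

lemma jump_le {u : ℝ} (hu : y ≤ u) {i : ℕ} (hi : 2 ≤ i) (huz : u ≤ z) (hπu : π u < i) :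
    jumpTime π y z i ≤ u := by
  have h1 : ¬ i ≤ 1 := by omega
  by_cases hp : π y < i
  · rw [jump_gt π y z hi hp]; exact hu
  · simp only [jumpTime, if_neg h1, if_neg hp]
    exact csInf_le ⟨y, fun v hv => hv.1⟩ ⟨hu, huz, hπu⟩

lemma jump_shift (hanti : ∀ u u' : ℝ, u ≤ u' → u' ≤ z → π u' ≤ π u)
    {y y' : ℝ} (hyy' : y ≤ y') (hy'z : y' ≤ z) {i : ℕ} (hi : i ≤ π y') :
    jumpTime π y z i = jumpTime π y' z i := by
  by_cases h1 : i ≤ 1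
  · simp [jumpTime, h1]
  · have hpy : ¬ π y < i := by
      have := hanti y y' hyy' hy'z; omega
    have hpy' : ¬ π y' < i := by omega
    simp only [jumpTime, if_neg h1, if_neg hpy, if_neg hpy']
    congr 1
    ext u
    simp only [Set.mem_setOf_eq]
    constructor
    · rintro ⟨h1u, h2u, h3u⟩
      refine ⟨?_, h2u, h3u⟩
      by_contra hc
      push_neg at hc
      have := hanti u y' hc.le hy'z
      omega
    · rintro ⟨h1u, h2u, h3u⟩
      exact ⟨le_trans hyy' h1u, h2u, h3u⟩

end Jump

section LPP

variable (B : ℕ → ℝ → ℝ) (n : ℕ) (y z : ℝ)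

def LPPset : Set ℝ :=
  {S : ℝ | ∃ tt : ℕ → ℝ,
    (∀ a b : ℕ, 1 ≤ a → a ≤ b → b ≤ n + 1 → tt b ≤ tt a) ∧
    tt (n + 1) = y ∧ tt 1 = z ∧
    S = ∑ i ∈ Finset.Icc 1 n, (B i (tt i) - B i (tt (i + 1)))}

lemma finLPP_eq : finLPP B n y z = sSup (LPPset B n y z) := rfl

lemma LPPset_bddAbove (hB : ∀ i, Continuous (B i)) (hyz : y ≤ z) :
    BddAbove (LPPset B n y z) := by
  have hex : ∀ i : ℕ, ∃ C : ℝ, ∀ u ∈ Set.Icc y z, |B i u| ≤ C := by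
    intro i
    obtain ⟨C, hC⟩ := IsCompact.exists_bound_of_continuousOn isCompact_Icc
      ((hB i).continuousOn (s := Set.Icc y z))
    exact ⟨C, fun u hu => by simpa [Real.norm_eq_abs] using hC u hu⟩
  choose C hC using hex
  refine ⟨∑ i ∈ Finset.Icc 1 n, (C i + C i), ?_⟩
  rintro S ⟨tt, hmono, hbot, htop, rfl⟩
  apply Finset.sum_le_sum
  intro i hi
  simp only [Finset.mem_Icc] at hi
  have hrange : ∀ j, 1 ≤ j → j ≤ n + 1 → tt j ∈ Set.Icc y z := by
    intro j hj1 hj2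
    constructor
    · rw [← hbot]; exact hmono j (n + 1) hj1 hj2 le_rfl
    · rw [← htop]; exact hmono 1 j le_rfl hj1 (by omega)
  have h1 := abs_le.mp (hC i _ (hrange i hi.1 (by omega)))
  have h2 := abs_le.mp (hC i _ (hrange (i + 1) (by omega) (by omega)))
  linarith [h1.2, h2.1]

lemma LPPset_nonempty (hyz : y ≤ z) (hn : 1 ≤ n) : (LPPset B n y z).Nonempty := by
  refine ⟨_, fun i => if i ≤ 1 then z else y, ?_, ?_, ?_, rfl⟩
  · intro a b ha hab hb
    simp only []
    split_ifs with h1 h2 <;> first | rfl | omega | exact hyz | exact le_rfl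
  · simp only [if_neg (by omega : ¬ n + 1 ≤ 1)]
  · simp

lemma le_finLPP {s : ℝ} (hB : ∀ i, Continuous (B i)) (hyz : y ≤ z)
    (hs : s ∈ LPPset B n y z) : s ≤ finLPP B n y z := by
  rw [finLPP_eq]
  exact le_csSup (LPPset_bddAbove B n y z hB hyz) hs

lemma exists_near (hB : ∀ i, Continuous (B i)) (hyz : y ≤ z) (hn : 1 ≤ n)
    {ε : ℝ} (hε : 0 < ε) :
    ∃ tt : ℕ → ℝ, (∀ a b : ℕ, 1 ≤ a → a ≤ b → b ≤ n + 1 → tt b ≤ tt a) ∧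
      tt (n + 1) = y ∧ tt 1 = z ∧
      finLPP B n y z - ε < ∑ i ∈ Finset.Icc 1 n, (B i (tt i) - B i (tt (i + 1))) := by
  obtain ⟨s, hs, hlt⟩ := exists_lt_of_lt_csSup (LPPset_nonempty B n y z hyz hn)
    (show finLPP B n y z - ε < sSup (LPPset B n y z) by rw [← finLPP_eq]; linarith)
  obtain ⟨tt, hm, hb, ht, rfl⟩ := hs
  exact ⟨tt, hm, hb, ht, hlt⟩

end LPP

section RestLen

variable (B : ℕ → ℝ → ℝ) (π : ℝ → ℕ) (y z : ℝ)

lemma restLen_mem (hyz : y ≤ z) (hz : π z = 1) (h1 : 1 ≤ π y) :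
    restLen B π y z ∈ LPPset B (π y) y z := by
  refine ⟨jumpTime π y z, ?_, ?_, jump_one π y z, rfl⟩
  · intro a b ha hab _; exact jump_anti π y z hyz hz hab
  · exact jump_gt π y z (by omega) (by omega)

lemma restLen_le_finLPP (hB : ∀ i, Continuous (B i)) (hyz : y ≤ z) (hz : π z = 1)
    (h1 : 1 ≤ π y) : restLen B π y z ≤ finLPP B (π y) y z :=
  le_finLPP B (π y) y z hB hyz (restLen_mem B π y z hyz hz h1)

lemma disc_nonpos (hB : ∀ i, Continuous (B i)) (hyz : y ≤ z) (hz : π z = 1)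
    (h1 : 1 ≤ π y) : disc B π z y ≤ 0 :=
  sub_nonpos.mpr (restLen_le_finLPP B π y z hB hyz hz h1)

end RestLen

lemma splice_sum (B : ℕ → ℝ → ℝ) (tt T U : ℕ → ℝ) (n N : ℕ) (h1 : 1 ≤ n) (hnN : n ≤ N)
    (hU1 : ∀ i, 1 ≤ i → i ≤ n → U i = tt i)
    (hU2 : ∀ i, n + 1 ≤ i → i ≤ N + 1 → U i = T i) :
    ∑ i ∈ Finset.Icc 1 N, (B i (U i) - B i (U (i + 1)))
      = (∑ i ∈ Finset.Icc 1 n, (B i (tt i) - B i (tt (i + 1))))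
        + (B n (tt (n + 1)) - B n (T (n + 1)))
        + ∑ i ∈ Finset.Icc (n + 1) N, (B i (T i) - B i (T (i + 1))) := by
  obtain ⟨m, rfl⟩ : ∃ m, n = m + 1 := ⟨n - 1, by omega⟩
  have hsplit : ∑ i ∈ Finset.Icc 1 N, (B i (U i) - B i (U (i + 1)))
      = (∑ i ∈ Finset.Icc 1 (m + 1), (B i (U i) - B i (U (i + 1))))
        + ∑ i ∈ Finset.Icc (m + 1 + 1) N, (B i (U i) - B i (U (i + 1))) := by
    rw [show (1 : ℕ) = 0 + 1 from rfl, Finset.Icc_add_one_left_eq_Ioc, Finset.Icc_add_one_left_eq_Ioc,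
      show Finset.Icc (m + (0 + 1) + (0 + 1)) N = Finset.Ioc (m + (0 + 1)) N by
        apply Finset.Icc_add_one_left_eq_Ioc]
    exact (Finset.sum_Ioc_consecutive _ (by omega) (by omega)).symm
  have h2 : ∑ i ∈ Finset.Icc (m + 1 + 1) N, (B i (U i) - B i (U (i + 1)))
      = ∑ i ∈ Finset.Icc (m + 1 + 1) N, (B i (T i) - B i (T (i + 1))) := by
    apply Finset.sum_congr rfl
    intro i hi
    simp only [Finset.mem_Icc] at hi
    rw [hU2 i (by omega) (by omega), hU2 (i + 1) (by omega) (by omega)]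
  have h3 : ∑ i ∈ Finset.Icc 1 (m + 1), (B i (U i) - B i (U (i + 1)))
      = (∑ i ∈ Finset.Icc 1 m, (B i (tt i) - B i (tt (i + 1))))
        + (B (m + 1) (tt (m + 1)) - B (m + 1) (T (m + 1 + 1))) := by
    rw [show (1 : ℕ) = 0 + 1 from rfl, Finset.Icc_add_one_left_eq_Ioc, Finset.Icc_add_one_left_eq_Ioc,
      Finset.sum_Ioc_succ_top (by omega)]
    congr 1
    · apply Finset.sum_congr rfl
      intro i hi
      simp only [Finset.mem_Ioc] at hi
      rw [hU1 i (by omega) (by omega), hU1 (i + 1) (by omega) (by omega)]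
    · rw [hU1 (m + 1) (by omega) (by omega), hU2 (m + 1 + 1) (by omega) (by omega)]
  have h4 : ∑ i ∈ Finset.Icc 1 (m + 1), (B i (tt i) - B i (tt (i + 1)))
      = (∑ i ∈ Finset.Icc 1 m, (B i (tt i) - B i (tt (i + 1))))
        + (B (m + 1) (tt (m + 1)) - B (m + 1) (tt (m + 1 + 1))) := by
    rw [show (1 : ℕ) = 0 + 1 from rfl, Finset.Icc_add_one_left_eq_Ioc, Finset.Icc_add_one_left_eq_Ioc,
      Finset.sum_Ioc_succ_top (by omega)]
  rw [hsplit, h2, h3, h4]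
  ring


lemma restLen_decomp (B : ℕ → ℝ → ℝ) (π : ℝ → ℕ) (z : ℝ)
    (hanti : ∀ u u' : ℝ, u ≤ u' → u' ≤ z → π u' ≤ π u) (hz : π z = 1)
    {y y0 : ℝ} (hyy0 : y ≤ y0) (hy0z : y0 ≤ z) (h1 : 1 ≤ π y0) :
    restLen B π y z = restLen B π y0 z + B (π y0) y0
      - B (π y0) (jumpTime π y z (π y0 + 1))
      + ∑ i ∈ Finset.Icc (π y0 + 1) (π y),
          (B i (jumpTime π y z i) - B i (jumpTime π y z (i + 1))) := by
  set n := π y0 with hn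
  set N := π y with hN
  set T := jumpTime π y z with hT
  have hnN : n ≤ N := hanti y y0 hyy0 hy0z
  have hsplit : restLen B π y z
      = (∑ i ∈ Finset.Icc 1 n, (B i (T i) - B i (T (i + 1))))
        + (B n (T (n + 1)) - B n (T (n + 1)))
        + ∑ i ∈ Finset.Icc (n + 1) N, (B i (T i) - B i (T (i + 1))) :=
    splice_sum B T T T n N h1 hnN (fun i _ _ => rfl) (fun i _ _ => rfl)
  have hdec : restLen B π y0 z
      = (∑ i ∈ Finset.Icc 1 n, (B i (T i) - B i (T (i + 1))))
        + (B n (T (n + 1)) - B n y0)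
        + ∑ i ∈ Finset.Icc (n + 1) n, (B i ((fun _ => y0) i) - B i ((fun _ => y0) (i + 1))) := by
    have := splice_sum B T (fun _ => y0) (jumpTime π y0 z) n n h1 le_rfl
      (fun i hi1 hi2 => (jump_shift π z hanti hyy0 hy0z (by omega)).symm)
      (fun i hi1 hi2 => by
        have : i = n + 1 := by omega
        subst this
        exact jump_gt π y0 z (by omega) (by omega))
    exact this
  have hempty : Finset.Icc (n + 1) n = (∅ : Finset ℕ) :=
    Finset.Icc_eq_empty (by omega)
  rw [hempty, Finset.sum_empty] at hdec
  rw [hsplit, hdec]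
  ring

lemma disc_mono' (B : ℕ → ℝ → ℝ) (hB : ∀ i, Continuous (B i)) {x z : ℝ} {π : ℝ → ℕ}
    (hπ : IsParabolicPath x z π) {y y' : ℝ} (hyy' : y ≤ y') (hy'z : y' < z) :
    disc B π z y ≤ disc B π z y' := by
  have hy'z' : y' ≤ z := hy'z.le
  have hyz : y ≤ z := le_trans hyy' hy'z'
  set n' := π y' with hn'
  set N := π y with hN
  have h1' : 1 ≤ n' := hπ.one_le y' hy'z'
  have h1N : 1 ≤ N := hπ.one_le y hyz
  have hn'N : n' ≤ N := hπ.anti y y' hyy' hy'z'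
  apply le_of_forall_pos_le_add
  intro ε hε
  obtain ⟨ss, hm, hbot, htop, hnear⟩ := exists_near B n' y' z hB hy'z' h1' hε
  set T := jumpTime π y z with hT
  set U : ℕ → ℝ := fun i => if i ≤ n' then ss i else T i with hU
  have hTle : T (n' + 1) ≤ y' :=
    jump_le π y z hyy' (by omega) hy'z' (by omega)
  have hUmem : (∑ i ∈ Finset.Icc 1 N, (B i (U i) - B i (U (i + 1)))) ∈ LPPset B N y z := by
    refine ⟨U, ?_, ?_, ?_, rfl⟩
    · intro a b ha hab hb
      simp only [hU]
      split_ifs with hbn han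
      · exact hm a b ha hab (by omega)
      · omega
      · calc T b ≤ T (n' + 1) := jump_anti π y z hyz hπ.ends (by omega)
          _ ≤ y' := hTle
          _ = ss (n' + 1) := hbot.symm
          _ ≤ ss a := hm a (n' + 1) ha (by omega) le_rfl
      · exact jump_anti π y z hyz hπ.ends hab
    · simp only [hU, if_neg (by omega : ¬ N + 1 ≤ n')]
      exact jump_gt π y z (by omega) (by omega)
    · simp only [hU, if_pos h1']
      exact htop
  have hle := le_finLPP B N y z hB hyz hUmem
  have hsplice := splice_sum B ss T U n' N h1' hn'N
    (fun i hi1 hi2 => by simp only [hU, if_pos hi2])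
    (fun i hi1 hi2 => by simp only [hU, if_neg (by omega : ¬ i ≤ n')])
  have hdecomp := restLen_decomp B π z hπ.anti hπ.ends hyy' hy'z' h1'
  rw [hbot] at hsplice
  simp only [disc, ← hN, ← hn', ← hT] at *
  linarith


lemma replacement (B : ℕ → ℝ → ℝ) (hB : ∀ i, Continuous (B i)) {x z : ℝ} {π : ℝ → ℕ}
    (hπ : IsParabolicPath x z π) {y0 : ℝ} (hy0 : y0 < z) {δ : ℝ} (hδ : 0 < δ) :
    ∃ τ : ℝ → ℕ, IsParabolicPath x z τ ∧
      ∀ y : ℝ, y ≤ y0 →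
        disc B π z y - disc B π z y0 - δ ≤ disc B τ z y := by
  set n := π y0 with hn
  have h1n : 1 ≤ n := hπ.one_le y0 hy0.le
  have hy0z : y0 ≤ z := hy0.le
  -- a strictly decreasing near-maximizer of the finite LPP problem from (y0,n) to (z,1)
  obtain ⟨tt, htt1, httn1, htt_strict, hStt⟩ :
      ∃ tt : ℕ → ℝ, tt 1 = z ∧ tt (n + 1) = y0 ∧
        (∀ a b : ℕ, 1 ≤ a → a < b → b ≤ n + 1 → tt b < tt a) ∧
        finLPP B n y0 z - δ < ∑ i ∈ Finset.Icc 1 n, (B i (tt i) - B i (tt (i + 1))) := by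
    obtain ⟨ss, hm, hbot, htop, hnear⟩ := exists_near B n y0 z hB hy0z h1n
      (show (0:ℝ) < δ / 2 by linarith)
    have hncast : (0 : ℝ) < (n : ℝ) := by exact_mod_cast h1n
    set lin : ℕ → ℝ := fun i => z - ((i : ℝ) - 1) * (z - y0) / n with hlin
    set ttf : ℝ → ℕ → ℝ := fun θ i => (1 - θ) * ss i + θ * lin i with httf
    have hcont : Continuous (fun θ : ℝ =>
        ∑ i ∈ Finset.Icc 1 n, (B i (ttf θ i) - B i (ttf θ (i + 1)))) := by
      apply continuous_finset_sum
      intro i _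
      have hc : ∀ j : ℕ, Continuous (fun θ : ℝ => (1 - θ) * ss j + θ * lin j) := by
        intro j; continuity
      exact ((hB i).comp (hc i)).sub ((hB i).comp (hc (i + 1)))
    have hS0 : ∑ i ∈ Finset.Icc 1 n, (B i (ttf 0 i) - B i (ttf 0 (i + 1)))
        = ∑ i ∈ Finset.Icc 1 n, (B i (ss i) - B i (ss (i + 1))) := by
      apply Finset.sum_congr rfl
      intro i _
      have e : ∀ j : ℕ, ttf 0 j = ss j := by intro j; simp [httf]
      rw [e, e]
    have hev : ∀ᶠ θ in nhds (0 : ℝ),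
        (∑ i ∈ Finset.Icc 1 n, (B i (ttf 0 i) - B i (ttf 0 (i + 1)))) - δ / 2
          < ∑ i ∈ Finset.Icc 1 n, (B i (ttf θ i) - B i (ttf θ (i + 1))) :=
      hcont.continuousAt.eventually (eventually_gt_nhds (by linarith))
    obtain ⟨r, hr, hball⟩ := Metric.eventually_nhds_iff.mp hev
    set θ : ℝ := min (r / 2) (1 / 2) with hθdef
    have hθpos : 0 < θ := lt_min (by linarith) (by norm_num)
    have hθ1 : θ ≤ 1 / 2 := min_le_right _ _
    have hθr : dist θ 0 < r := by
      rw [Real.dist_eq, sub_zero, abs_of_pos hθpos]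
      calc θ ≤ r / 2 := min_le_left _ _
        _ < r := by linarith
    have hSθ := hball hθr
    rw [hS0] at hSθ
    refine ⟨ttf θ, ?_, ?_, ?_, by linarith⟩
    · show (1 - θ) * ss 1 + θ * lin 1 = z
      have hl : lin 1 = z := by simp [hlin]
      rw [htop, hl]; ring
    · show (1 - θ) * ss (n + 1) + θ * lin (n + 1) = y0
      have hl : lin (n + 1) = y0 := by
        simp only [hlin]
        have hne0 : (n : ℝ) ≠ 0 := ne_of_gt hncast
        push_cast
        field_simp
        ring
      rw [hbot, hl]; ring
    · intro a b ha hab hb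
      have hss : ss b ≤ ss a := hm a b ha hab.le hb
      have hcast : (a : ℝ) < (b : ℝ) := by exact_mod_cast hab
      have hzy : 0 < z - y0 := by linarith
      have hnum : ((a : ℝ) - 1) * (z - y0) < ((b : ℝ) - 1) * (z - y0) := by nlinarith
      have hdiv : ((a : ℝ) - 1) * (z - y0) / n < ((b : ℝ) - 1) * (z - y0) / n :=
        div_lt_div_of_pos_right hnum hncast
      have hlab : lin b < lin a := by simp only [hlin]; linarith
      show (1 - θ) * ss b + θ * lin b < (1 - θ) * ss a + θ * lin a
      nlinarith [mul_nonneg (by linarith : (0:ℝ) ≤ 1 - θ) (by linarith : (0:ℝ) ≤ ss a - ss b),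
        mul_pos hθpos (by linarith : (0:ℝ) < lin a - lin b)]
  have htt_mono : ∀ a b : ℕ, 1 ≤ a → a ≤ b → b ≤ n + 1 → tt b ≤ tt a := by
    intro a b ha hab hb
    rcases eq_or_lt_of_le hab with h | h
    · rw [h]
    · exact (htt_strict a b ha h hb).le
  have httnpos : y0 < tt n := by
    have h' := htt_strict n (n + 1) h1n (lt_add_one n) le_rfl
    rwa [httn1] at h'
  -- the replacement path
  set τ : ℝ → ℕ := fun u => if u ≤ y0 then π u
    else sInf {j : ℕ | 1 ≤ j ∧ tt (j + 1) ≤ u} with hτdef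
  have hτπ : ∀ u : ℝ, u ≤ y0 → τ u = π u := fun u hu => if_pos hu
  have hτeq : ∀ u : ℝ, y0 < u → τ u = sInf {j : ℕ | 1 ≤ j ∧ tt (j + 1) ≤ u} :=
    fun u hu => if_neg (not_le.mpr hu)
  have hne : ∀ u : ℝ, y0 < u → {j : ℕ | 1 ≤ j ∧ tt (j + 1) ≤ u}.Nonempty :=
    fun u hu => ⟨n, h1n, by rw [httn1]; linarith⟩
  have hmem : ∀ u : ℝ, y0 < u → 1 ≤ τ u ∧ tt (τ u + 1) ≤ u := by
    intro u hu; rw [hτeq u hu]; exact Nat.sInf_mem (hne u hu)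
  have hτn : ∀ u : ℝ, y0 < u → τ u ≤ n := by
    intro u hu; rw [hτeq u hu]
    exact Nat.sInf_le ⟨h1n, by rw [httn1]; linarith⟩
  have hiff : ∀ u : ℝ, y0 < u → ∀ i : ℕ, 2 ≤ i → i ≤ n + 1 → (τ u < i ↔ tt i ≤ u) := by
    intro u hu i h2 hin
    constructor
    · intro hlt
      have h := hmem u hu
      have hti : tt i ≤ tt (τ u + 1) := htt_mono (τ u + 1) i (by omega) (by omega) hin
      linarith [h.2]
    · intro hti
      obtain ⟨m, rfl⟩ : ∃ m, i = m + 1 := ⟨i - 1, by omega⟩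
      have hmm : m ∈ {j : ℕ | 1 ≤ j ∧ tt (j + 1) ≤ u} := ⟨by omega, hti⟩
      rw [hτeq u hu]
      exact lt_of_le_of_lt (Nat.sInf_le hmm) (by omega)
  have hτanti : ∀ u u' : ℝ, u ≤ u' → u' ≤ z → τ u' ≤ τ u := by
    intro u u' huu' hu'z
    by_cases hu' : u' ≤ y0
    · rw [hτπ u' hu', hτπ u (le_trans huu' hu')]
      exact hπ.anti u u' huu' (le_trans hu' hy0z)
    · push_neg at hu'
      by_cases hu : u ≤ y0
      · rw [hτπ u hu]
        calc τ u' ≤ n := hτn u' hu'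
          _ ≤ π u := hπ.anti u y0 hu hy0z
      · push_neg at hu
        rw [hτeq u' hu', hτeq u hu]
        have hm' := Nat.sInf_mem (hne u hu)
        exact Nat.sInf_le ⟨hm'.1, le_trans hm'.2 huu'⟩
  have hτ1 : ∀ u : ℝ, u ≤ z → 1 ≤ τ u := by
    intro u huz
    by_cases hu : u ≤ y0
    · rw [hτπ u hu]; exact hπ.one_le u huz
    · exact (hmem u (not_le.mp hu)).1
  have hτpath : IsParabolicPath x z τ := by
    constructor
    · exact hτ1
    · exact fun u u' h h' => hτanti u u' h h'
    · -- cadlag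
      intro u huz
      rcases lt_trichotomy u y0 with hu | hu | hu
      · obtain ⟨ε, hε, hconst⟩ := hπ.cadlag u (lt_trans hu hy0)
        refine ⟨min ε (y0 - u), lt_min hε (by linarith), ?_⟩
        intro v hv1 hv2 hv3
        have hvy0 : v ≤ y0 := by
          have := min_le_right ε (y0 - u); linarith
        rw [hτπ v hvy0, hτπ u hu.le]
        exact hconst v hv1 (by have := min_le_left ε (y0 - u); linarith) hv3
      · subst hu
        refine ⟨(tt n - u) / 2, half_pos (sub_pos.mpr httnpos), ?_⟩
        intro v hv1 hv2 hv3
        rw [hτπ u le_rfl]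
        rcases eq_or_lt_of_le hv1 with h | h
        · rw [← h, hτπ u le_rfl]
        · have hvn : v < tt n := by linarith
          have hτv := hτn v h
          have hτv1 := (hmem v h).1
          by_contra hc
          have hlt : τ v < n := by omega
          have := (hiff v h n (by omega) (by omega)).mp hlt
          linarith
      · have hτu1 := hτ1 u huz.le
        rcases eq_or_lt_of_le hτu1 with h1 | h2
        · refine ⟨1, one_pos, ?_⟩
          intro v hv1 hv2 hv3
          have hle := hτanti u v hv1 hv3
          have := hτ1 v hv3
          omega
        · have hi2 : 2 ≤ τ u := h2
          have hin : τ u ≤ n := hτn u hu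
          have hti₀ : u < tt (τ u) := by
            by_contra hc
            push_neg at hc
            have := (hiff u hu (τ u) hi2 (by omega)).mpr hc
            omega
          refine ⟨(tt (τ u) - u) / 2, half_pos (sub_pos.mpr hti₀), ?_⟩
          intro v hv1 hv2 hv3
          have hvu : y0 < v := lt_of_lt_of_le hu hv1
          have hle := hτanti u v hv1 hv3
          by_contra hc
          have hlt : τ v < τ u := by omega
          have := (hiff v hvu (τ u) hi2 (by omega)).mp hlt
          linarith
    · -- ends
      have h2z : tt 2 ≤ z := by
        rw [← htt1]
        exact htt_mono 1 2 le_rfl (by omega) (by omega)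
      have hle : τ z ≤ 1 := by
        rw [hτeq z hy0]
        exact Nat.sInf_le ⟨le_rfl, h2z⟩
      have := hτ1 z le_rfl
      omega
    · -- direction
      refine Tendsto.congr' ?_ hπ.direction
      filter_upwards [eventually_le_atBot y0] with u hu
      rw [hτπ u hu]
  refine ⟨τ, hτpath, ?_⟩
  intro y hy
  have hyz : y ≤ z := le_trans hy hy0z
  have hτy : τ y = π y := hτπ y hy
  have hnN : n ≤ π y := hπ.anti y y0 hy hy0z
  have h1N : 1 ≤ π y := hπ.one_le y hyz
  -- jump time identities for the replacement path
  have hJ1 : ∀ i : ℕ, 1 ≤ i → i ≤ n → jumpTime τ y z i = tt i := by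
    intro i hi1 hin
    rcases eq_or_lt_of_le hi1 with h | h
    · rw [← h, jump_one, htt1]
    · have hi2 : 2 ≤ i := h
      have hτyi : ¬ τ y < i := by rw [hτy]; omega
      have htiy0 : y0 < tt i := by
        have h' := htt_strict i (n + 1) hi1 (by omega) le_rfl
        rwa [httn1] at h'
      have hseteq : {u : ℝ | y ≤ u ∧ u ≤ z ∧ τ u < i} = Set.Icc (tt i) z := by
        ext u
        simp only [Set.mem_setOf_eq, Set.mem_Icc]
        constructor
        · rintro ⟨h1u, h2u, h3u⟩
          refine ⟨?_, h2u⟩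
          by_cases hu : u ≤ y0
          · exfalso
            rw [hτπ u hu] at h3u
            have := hπ.anti u y0 hu hy0z
            omega
          · push_neg at hu
            exact (hiff u hu i hi2 (by omega)).mp h3u
        · rintro ⟨h1u, h2u⟩
          have huy0 : y0 < u := lt_of_lt_of_le htiy0 h1u
          exact ⟨by linarith, h2u, (hiff u huy0 i hi2 (by omega)).mpr h1u⟩
      have httiz : tt i ≤ z := by
        rw [← htt1]; exact htt_mono 1 i le_rfl hi1 (by omega)
      rw [show jumpTime τ y z i
          = sInf {u : ℝ | y ≤ u ∧ u ≤ z ∧ τ u < i} by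
        simp only [jumpTime, if_neg (show ¬ i ≤ 1 by omega), if_neg hτyi]]
      rw [hseteq]
      exact csInf_Icc httiz
  have hJ2 : ∀ i : ℕ, n + 1 ≤ i → jumpTime τ y z i = jumpTime π y z i := by
    intro i hin
    have hi1 : ¬ i ≤ 1 := by omega
    by_cases hp : π y < i
    · rw [jump_gt π y z (by omega) hp, jump_gt τ y z (by omega) (by rw [hτy]; omega)]
    · have hτp : ¬ τ y < i := by rw [hτy]; omega
      simp only [jumpTime, if_neg hi1, if_neg hp, if_neg hτp]
      congr 1
      ext u
      simp only [Set.mem_setOf_eq]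
      constructor
      · rintro ⟨h1u, h2u, h3u⟩
        refine ⟨h1u, h2u, ?_⟩
        by_cases hu : u ≤ y0
        · rwa [hτπ u hu] at h3u
        · push_neg at hu
          have := hπ.anti y0 u hu.le h2u
          omega
      · rintro ⟨h1u, h2u, h3u⟩
        refine ⟨h1u, h2u, ?_⟩
        by_cases hu : u ≤ y0
        · rwa [hτπ u hu]
        · push_neg at hu
          have := hτn u hu
          omega
  have hsplice : restLen B τ y z
      = (∑ i ∈ Finset.Icc 1 n, (B i (tt i) - B i (tt (i + 1))))
        + (B n y0 - B n (jumpTime π y z (n + 1)))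
        + ∑ i ∈ Finset.Icc (n + 1) (π y),
            (B i (jumpTime π y z i) - B i (jumpTime π y z (i + 1))) := by
    have h := splice_sum B tt (jumpTime π y z) (jumpTime τ y z) n (π y) h1n hnN hJ1
      (fun i hi1 _ => hJ2 i hi1)
    rw [httn1] at h
    rw [← h]
    simp only [restLen, hτy]
  have hdecomp := restLen_decomp B π z hπ.anti hπ.ends hy hy0z h1n
  rw [← hn] at hdecomp
  have hd: disc B τ z y = restLen B τ y z - finLPP B (π y) y z := by
    simp only [disc, hτy]
  have hd2 : disc B π z y = restLen B π y z - finLPP B (π y) y z := rfl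
  have hd3 : disc B π z y0 = restLen B π y0 z - finLPP B n y0 z := rfl
  rw [hd, hd2, hd3, hsplice, hdecomp]
  linarith



/-- A parabolic path `π` from `x ≥ 0` to `z` across the parabolic
Airy line ensemble `𝓑` (with coupled half Airy sheet `𝓢`) is a geodesic if and only if
its discrepancy `D_π(y)` vanishes for all `y < z`; moreover `D_π` is nondecreasing in
`y`, so the liminf in the definition of `‖π‖_𝓑` is a limit. -/
theorem geodesic_iff_zero_discrepancy
    (B : ℕ → ℝ → ℝ) (hB : ∀ i : ℕ, Continuous (B i)) (S : ℝ → ℝ → ℝ)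
    (x z : ℝ) (hx : 0 ≤ x) (π : ℝ → ℕ) (hπ : IsParabolicPath x z π) :
    (IsGeodesic B S x z π ↔ ∀ y : ℝ, y < z → disc B π z y = 0) ∧
    (∀ y y' : ℝ, y ≤ y' → y' < z → disc B π z y ≤ disc B π z y') ∧
    Tendsto (fun y : ℝ => ((disc B π z y : ℝ) : EReal)) atBot
      (nhds (Filter.liminf (fun y : ℝ => ((disc B π z y : ℝ) : EReal)) atBot)) := by
  have hmono : ∀ y y' : ℝ, y ≤ y' → y' < z → disc B π z y ≤ disc B π z y' :=
    fun y y' h h' => disc_mono' B hB hπ h h'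
  set f : ℝ → EReal := fun y => ((disc B π z y : ℝ) : EReal) with hf
  have hbound_ev : ∀ y' : ℝ, y' < z → ∀ᶠ y in atBot, f y ≤ f y' := by
    intro y' h
    filter_upwards [eventually_le_atBot y'] with u hu
    exact EReal.coe_le_coe_iff.mpr (hmono u y' hu h)
  have hlimsup_le : ∀ y' : ℝ, y' < z → limsup f atBot ≤ f y' :=
    fun y' h => limsup_le_of_le (by isBoundedDefault) (hbound_ev y' h)
  have hnonpos : ∀ w : ℝ, w < z → disc B π z w ≤ 0 :=
    fun w hw => disc_nonpos B π w z hB hw.le hπ.ends (hπ.one_le w hw.le)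
  -- part 3 : convergence
  have h1 : limsup f atBot ≤ ⨅ y' : Set.Iio z, f y' :=
    le_iInf fun w => hlimsup_le w.1 w.2
  have h2 : (⨅ y' : Set.Iio z, f y') ≤ liminf f atBot := by
    refine le_liminf_of_le (by isBoundedDefault) ?_
    filter_upwards [eventually_lt_atBot z] with u hu
    exact iInf_le (fun y' : Set.Iio z => f y') ⟨u, hu⟩
  have h3 : liminf f atBot ≤ limsup f atBot :=
    liminf_le_limsup (by isBoundedDefault) (by isBoundedDefault)
  have heq : limsup f atBot = liminf f atBot := le_antisymm (h1.trans h2) h3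
  have htends : Tendsto f atBot (nhds (liminf f atBot)) :=
    tendsto_of_liminf_eq_limsup rfl heq
  refine ⟨?_, hmono, htends⟩
  constructor
  · -- geodesic implies zero discrepancy
    intro hgeo y hyz
    have hLne : liminf f atBot ≠ ⊥ := by
      intro hbot
      apply hgeo.2.1
      rw [parLen, ← hf, hbot, EReal.add_bot]
    have hLle : liminf f atBot ≤ 0 := by
      have hle : liminf f atBot ≤ liminf (fun _ : ℝ => (0 : EReal)) atBot := by
        refine liminf_le_liminf ?_
        filter_upwards [eventually_lt_atBot z] with u hu
        exact EReal.coe_nonpos.mpr (hnonpos u hu)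
      rwa [liminf_const] at hle
    have hL0 : liminf f atBot = 0 := by
      rcases lt_or_eq_of_le hLle with hlt | heq0
      · exfalso
        have hLnetop : liminf f atBot ≠ ⊤ := (hlt.trans_le le_top).ne
        set l := (liminf f atBot).toReal with hl
        have hcoe : ((l : ℝ) : EReal) = liminf f atBot := EReal.coe_toReal hLnetop hLne
        have hlneg : l < 0 := by
          rw [← hcoe] at hlt
          exact_mod_cast hlt
        set δ := -l / 3 with hδdef
        have hδ : 0 < δ := by rw [hδdef]; linarith
        have hfreq : ∃ᶠ w in atBot, f w < ((l + δ : ℝ) : EReal) := by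
          refine frequently_lt_of_liminf_lt (by isBoundedDefault) ?_
          rw [← hcoe]
          exact_mod_cast (by linarith : l < l + δ)
        obtain ⟨y0, hfy0, hy0z⟩ := (hfreq.and_eventually (eventually_lt_atBot z)).exists
        have hd0 : disc B π z y0 < l + δ := by
          have h' : ((disc B π z y0 : ℝ) : EReal) < ((l + δ : ℝ) : EReal) := hfy0
          exact_mod_cast h'
        obtain ⟨τ, hτpath, hτest⟩ := replacement B hB hπ hy0z hδ
        have hlower : ∀ w : ℝ, w < z → (l : EReal) ≤ f w := by
          intro w hw
          calc (l : EReal) = liminf f atBot := hcoe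
            _ ≤ limsup f atBot := h3
            _ ≤ f w := hlimsup_le w hw
        have hg : ∀ᶠ w in atBot, ((-2 * δ : ℝ) : EReal) ≤ ((disc B τ z w : ℝ) : EReal) := by
          filter_upwards [eventually_le_atBot y0] with w hw
          have h1w : l ≤ disc B π z w := by
            have h' : ((l : ℝ) : EReal) ≤ ((disc B π z w : ℝ) : EReal) :=
              hlower w (lt_of_le_of_lt hw hy0z)
            exact_mod_cast h'
          have h2w := hτest w hw
          exact EReal.coe_le_coe_iff.mpr (by linarith)
        have hliminfτ : ((-2 * δ : ℝ) : EReal)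
            ≤ liminf (fun w : ℝ => ((disc B τ z w : ℝ) : EReal)) atBot :=
          le_liminf_of_le (by isBoundedDefault) hg
        have hcmp := hgeo.2.2.2 τ hτpath
        rw [parLen, parLen, ← hf] at hcmp
        have h4 : (S x z : EReal) + ((-2 * δ : ℝ) : EReal)
            ≤ (S x z : EReal) + liminf (fun w : ℝ => ((disc B τ z w : ℝ) : EReal)) atBot :=
          add_le_add_right hliminfτ _
        have h5 : ((S x z + -2 * δ : ℝ) : EReal) ≤ ((S x z + l : ℝ) : EReal) := by
          rw [EReal.coe_add, EReal.coe_add]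
          refine le_trans h4 (le_trans hcmp ?_)
          rw [hcoe]
        have h6 : S x z + -2 * δ ≤ S x z + l := by exact_mod_cast h5
        rw [hδdef] at h6
        linarith
      · exact heq0
    have hge : (0 : ℝ) ≤ disc B π z y := by
      have h' : (0 : EReal) ≤ ((disc B π z y : ℝ) : EReal) := by
        calc (0 : EReal) = liminf f atBot := hL0.symm
          _ ≤ limsup f atBot := h3
          _ ≤ f y := hlimsup_le y hyz
      exact_mod_cast h'
    exact le_antisymm (hnonpos y hyz) hge
  · -- zero discrepancy implies geodesic
    intro h
    have hev0 : ∀ᶠ y in atBot, f y = (0 : EReal) := by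
      filter_upwards [eventually_lt_atBot z] with u hu
      rw [hf]
      simp only [h u hu, EReal.coe_zero]
    have hlim : liminf f atBot = 0 := by
      rw [liminf_congr hev0, liminf_const]
    refine ⟨hπ, ?_, ?_, ?_⟩
    · rw [parLen, ← hf, hlim, add_zero]
      exact EReal.coe_ne_bot _
    · rw [parLen, ← hf, hlim, add_zero]
      exact EReal.coe_ne_top _
    · intro τ hτ
      have hτ0 : liminf (fun w : ℝ => ((disc B τ z w : ℝ) : EReal)) atBot ≤ 0 := by
        have hle : liminf (fun w : ℝ => ((disc B τ z w : ℝ) : EReal)) atBot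
            ≤ liminf (fun _ : ℝ => (0 : EReal)) atBot := by
          refine liminf_le_liminf ?_
          filter_upwards [eventually_lt_atBot z] with u hu
          exact EReal.coe_nonpos.mpr
            (disc_nonpos B τ u z hB hu.le hτ.ends (hτ.one_le u hu.le))
        rwa [liminf_const] at hle
      rw [parLen, parLen, ← hf, hlim, add_zero]
      calc (S x z : EReal) + liminf (fun w : ℝ => ((disc B τ z w : ℝ) : EReal)) atBot
          ≤ (S x z : EReal) + 0 := add_le_add_right hτ0 _
        _ = (S x z : EReal) := add_zero _

end ParabolicLPP
end

section
/- Almost surely, the following holds for the parabolic Airy line ensemble 𝓑. Let π_1, π_2 be parabolic paths from the same x ≥ 0 to z_1 and z_2 respectively, which agree on (−∞, z_0] for some z_0 < min(z_1,z_2). Then ‖π_1‖_𝓑 − ‖π_1|_{[z_0,z_1]}‖_𝓑 = ‖π_2‖_𝓑 − ‖π_2|_{[z_0,z_2]}‖_𝓑; that is, the difference in lengths of two parabolic paths agreeing off a compact set can be computed locally. -/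
open Filter

namespace ParabolicLPP

/-! ### Auxiliary lemmas -/

lemma jumpTime_one (π : ℝ → ℕ) (y z : ℝ) : jumpTime π y z 1 = z := by
  simp [jumpTime]

/-- For lines `2 ≤ i ≤ π z₀`, the jump time of `π|_{[y,z]}` below line `i` agrees with that
of `π|_{[z₀,z]}` (the jump happens after `z₀`). -/
lemma jumpTime_left_eq {x z : ℝ} {π : ℝ → ℕ} (hπ : IsParabolicPath x z π)
    {y z₀ : ℝ} (hy : y ≤ z₀) (hz : z₀ ≤ z) {i : ℕ} (h2 : 2 ≤ i) (him : i ≤ π z₀) :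
    jumpTime π y z i = jumpTime π z₀ z i := by
  have hn : i ≤ π y := him.trans (hπ.anti y z₀ hy hz)
  rw [jumpTime, jumpTime, if_neg (by omega), if_neg (by omega), if_neg (by omega),
    if_neg (by omega)]
  congr 1
  ext u
  constructor
  · rintro ⟨hu1, hu2, hu3⟩
    refine ⟨?_, hu2, hu3⟩
    by_contra hlt
    push_neg at hlt
    have := hπ.anti u z₀ hlt.le hz
    omega
  · rintro ⟨hu1, hu2, hu3⟩
    exact ⟨hy.trans hu1, hu2, hu3⟩

/-- For lines `i > π z₀`, the jump time of `π|_{[y,z]}` below line `i` agrees with that of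
`π|_{[y,z₀]}` (the jump happens before `z₀`). -/
lemma jumpTime_right_eq {x z : ℝ} {π : ℝ → ℕ} (hπ : IsParabolicPath x z π)
    {y z₀ : ℝ} (hy : y ≤ z₀) (hz : z₀ ≤ z) {i : ℕ} (him : π z₀ < i) :
    jumpTime π y z i = jumpTime π y z₀ i := by
  have h1 : ¬ i ≤ 1 := by have := hπ.one_le z₀ hz; omega
  rw [jumpTime, jumpTime, if_neg h1, if_neg h1]
  by_cases hny : π y < i
  · rw [if_pos hny, if_pos hny]
  · rw [if_neg hny, if_neg hny]
    have hz0mem : z₀ ∈ {u : ℝ | y ≤ u ∧ u ≤ z₀ ∧ π u < i} := ⟨hy, le_refl _, him⟩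
    have hbdd : BddBelow {u : ℝ | y ≤ u ∧ u ≤ z ∧ π u < i} := ⟨y, fun u hu => hu.1⟩
    have hbdd0 : BddBelow {u : ℝ | y ≤ u ∧ u ≤ z₀ ∧ π u < i} := ⟨y, fun u hu => hu.1⟩
    have hsub : {u : ℝ | y ≤ u ∧ u ≤ z₀ ∧ π u < i} ⊆ {u : ℝ | y ≤ u ∧ u ≤ z ∧ π u < i} :=
      fun u hu => ⟨hu.1, hu.2.1.trans hz, hu.2.2⟩
    refine le_antisymm (csInf_le_csInf hbdd ⟨z₀, hz0mem⟩ hsub) ?_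
    refine le_csInf ⟨z₀, hsub hz0mem⟩ ?_
    intro u hu
    by_cases huz : u ≤ z₀
    · exact csInf_le hbdd0 ⟨hu.1, huz, hu.2.2⟩
    · exact (csInf_le hbdd0 hz0mem).trans (le_of_not_ge huz)

lemma jumpTime_self_succ {x z : ℝ} {π : ℝ → ℕ} (hπ : IsParabolicPath x z π)
    {z₀ : ℝ} (hz : z₀ ≤ z) : jumpTime π z₀ z (π z₀ + 1) = z₀ := by
  have h1 : 1 ≤ π z₀ := hπ.one_le z₀ hz
  rw [jumpTime, if_neg (by omega), if_pos (by omega)]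

/-- `jumpTime π y z₀ i` depends only on the values of `π` on `(-∞, z₀]`. -/
lemma jumpTime_congr {π₁ π₂ : ℝ → ℕ} {z₀ : ℝ} (hagree : ∀ u : ℝ, u ≤ z₀ → π₁ u = π₂ u)
    {y : ℝ} (hy : y ≤ z₀) (i : ℕ) : jumpTime π₁ y z₀ i = jumpTime π₂ y z₀ i := by
  have hset : {u : ℝ | y ≤ u ∧ u ≤ z₀ ∧ π₁ u < i} = {u : ℝ | y ≤ u ∧ u ≤ z₀ ∧ π₂ u < i} :=
    Set.ext fun u => and_congr_right fun _ => and_congr_right fun h2 => by rw [hagree u h2]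
  rw [jumpTime, jumpTime, hagree y hy, hset]

/-- **Key splitting lemma**: the length of `π|_{[y,z]}` equals the length of `π|_{[z₀,z]}` plus
a quantity depending only on `B`, `y`, `z₀` and the restriction of `π` to `(-∞, z₀]`. -/
lemma restLen_split (B : ℕ → ℝ → ℝ) {x z : ℝ} {π : ℝ → ℕ} (hπ : IsParabolicPath x z π)
    {y z₀ : ℝ} (hy : y ≤ z₀) (hz : z₀ < z) :
    restLen B π y z = restLen B π z₀ z +
      ((B (π z₀) z₀ - B (π z₀) (jumpTime π y z₀ (π z₀ + 1))) +
       ∑ i ∈ Finset.Ioc (π z₀) (π y),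
         (B i (jumpTime π y z₀ i) - B i (jumpTime π y z₀ (i + 1)))) := by
  have hm1 : 1 ≤ π z₀ := hπ.one_le z₀ hz.le
  have hmn : π z₀ ≤ π y := hπ.anti y z₀ hy hz.le
  set m := π z₀ with hm
  set n := π y with hn
  have hT : ∀ b : ℕ, 1 ≤ b → b ≤ m → jumpTime π y z b = jumpTime π z₀ z b := by
    intro b h1 h2
    by_cases hb1 : b = 1
    · subst hb1; rw [jumpTime_one, jumpTime_one]
    · exact jumpTime_left_eq hπ hy hz.le (by omega) h2
  have hS : ∀ b : ℕ, m < b → jumpTime π y z b = jumpTime π y z₀ b := by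
    intro b hb
    exact jumpTime_right_eq hπ hy hz.le hb
  -- split the sum
  rw [restLen, restLen, ← hn, ← hm]
  rw [show Finset.Icc 1 n = Finset.Ioc 0 n from Finset.Icc_add_one_left_eq_Ioc 0 n,
    show Finset.Icc 1 m = Finset.Ioc 0 m from Finset.Icc_add_one_left_eq_Ioc 0 m]
  rw [← Finset.sum_Ioc_consecutive _ (Nat.zero_le m) hmn]
  have htail : ∑ i ∈ Finset.Ioc m n, (B i (jumpTime π y z i) - B i (jumpTime π y z (i + 1)))
      = ∑ i ∈ Finset.Ioc m n, (B i (jumpTime π y z₀ i) - B i (jumpTime π y z₀ (i + 1))) := by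
    refine Finset.sum_congr rfl fun i hi => ?_
    have hi' := Finset.mem_Ioc.1 hi
    rw [hS i hi'.1, hS (i + 1) (by omega)]
  have hhead : ∑ i ∈ Finset.Ioc 0 m, (B i (jumpTime π y z i) - B i (jumpTime π y z (i + 1)))
      - ∑ i ∈ Finset.Ioc 0 m, (B i (jumpTime π z₀ z i) - B i (jumpTime π z₀ z (i + 1)))
      = B m z₀ - B m (jumpTime π y z₀ (m + 1)) := by
    rw [← Finset.sum_sub_distrib]
    rw [Finset.sum_eq_single_of_mem m (Finset.mem_Ioc.2 ⟨by omega, le_refl m⟩)]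
    · rw [hT m hm1 (le_refl m), hS (m + 1) (by omega), jumpTime_self_succ hπ hz.le]
      ring
    · intro b hb hbm
      have hb' := Finset.mem_Ioc.1 hb
      rw [hT b hb'.1 hb'.2, hT (b + 1) (by omega) (by omega)]
      ring
  rw [htail]
  linarith [hhead]

/-- Adding a real constant commutes with `liminf` on `EReal`. -/
noncomputable def addRealIso (c : ℝ) : EReal ≃o EReal where
  toFun x := x + (c : EReal)
  invFun x := x - (c : EReal)
  left_inv _ := EReal.add_sub_cancel_right
  right_inv _ := EReal.sub_add_cancel
  map_rel_iff' := (EReal.addLECancellable_coe c).add_le_add_iff_right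

lemma liminf_coe_add_const (f : ℝ → ℝ) (c : ℝ) :
    Filter.liminf (fun y : ℝ => ((f y + c : ℝ) : EReal)) atBot
      = Filter.liminf (fun y : ℝ => ((f y : ℝ) : EReal)) atBot + (c : EReal) := by
  have h := ((addRealIso c).liminf_apply (f := atBot) (u := fun y : ℝ => ((f y : ℝ) : EReal)))
  simp only [addRealIso, RelIso.coe_fn_mk, Equiv.coe_fn_mk] at h
  simp only [EReal.coe_add]
  exact h.symm

/-- `liminf` of a sum with a convergent sequence, in `EReal`. -/
lemma liminf_coe_add_tendsto (f g : ℝ → ℝ) (K : ℝ) (hg : Tendsto g atBot (nhds K)) :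
    Filter.liminf (fun y : ℝ => ((f y + g y : ℝ) : EReal)) atBot
      = Filter.liminf (fun y : ℝ => ((f y : ℝ) : EReal)) atBot + (K : EReal) := by
  set A := Filter.liminf (fun y : ℝ => ((f y : ℝ) : EReal)) atBot with hA
  set C := Filter.liminf (fun y : ℝ => ((f y + g y : ℝ) : EReal)) atBot with hC
  have key : ∀ ε : ℝ, 0 < ε →
      A + ((K - ε : ℝ) : EReal) ≤ C ∧ C ≤ A + ((K + ε : ℝ) : EReal) := by
    intro ε hε
    have hev : ∀ᶠ y in atBot, g y ∈ Set.Icc (K - ε) (K + ε) :=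
      hg (Icc_mem_nhds (by linarith) (by linarith))
    constructor
    · rw [hA, ← liminf_coe_add_const f (K - ε)]
      refine liminf_le_liminf ?_
      filter_upwards [hev] with y hy
      exact EReal.coe_le_coe_iff.2 (by linarith [hy.1])
    · rw [hA, ← liminf_coe_add_const f (K + ε)]
      refine liminf_le_liminf ?_
      filter_upwards [hev] with y hy
      exact EReal.coe_le_coe_iff.2 (by linarith [hy.2])
  clear_value A C
  clear hA hC
  induction A using EReal.rec with
  | bot =>
    have h := (key 1 one_pos).2
    rw [EReal.bot_add] at h ⊢
    exact le_bot_iff.1 h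
  | coe a =>
    have hCtop : C ≠ ⊤ := by
      intro h
      have h2 := (key 1 one_pos).2
      rw [h, ← EReal.coe_add] at h2
      exact (EReal.coe_lt_top _).not_ge h2
    have hCbot : C ≠ ⊥ := by
      intro h
      have h2 := (key 1 one_pos).1
      rw [h, ← EReal.coe_add, le_bot_iff] at h2
      exact EReal.coe_ne_bot _ h2
    lift C to ℝ using ⟨hCtop, hCbot⟩ with c
    rw [← EReal.coe_add, EReal.coe_eq_coe_iff]
    have h1 : ∀ ε : ℝ, 0 < ε → a + (K - ε) ≤ c := by
      intro ε hε
      have := (key ε hε).1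
      rw [← EReal.coe_add] at this
      exact_mod_cast this
    have h2 : ∀ ε : ℝ, 0 < ε → c ≤ a + (K + ε) := by
      intro ε hε
      have := (key ε hε).2
      rw [← EReal.coe_add] at this
      exact_mod_cast this
    by_contra hne
    rcases lt_or_gt_of_ne hne with hlt | hgt
    · have := h1 ((a + K - c) / 2) (by linarith)
      linarith
    · have := h2 ((c - (a + K)) / 2) (by linarith)
      linarith
  | top =>
    have h := (key 1 one_pos).1
    rw [EReal.top_add_coe] at h ⊢
    exact top_le_iff.1 h

/-- (Given the almost-sure identity
`𝓢(x, z₁) − 𝓢(x, z₂) = lim_{y → −∞} 𝓑[(y, π(y)) → (z₁, 1)] − 𝓑[(y, π(y)) → (z₂, 1)]`,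
valid for any parabolic path `π` of direction `x`.)  Let `π₁, π₂` be parabolic paths
from the same `x ≥ 0` to `z₁` and `z₂` respectively, agreeing on `(−∞, z₀]` for some
`z₀ < min z₁ z₂`.  Then
`‖π₁‖_𝓑 − ‖π₁|_{[z₀,z₁]}‖_𝓑 = ‖π₂‖_𝓑 − ‖π₂|_{[z₀,z₂]}‖_𝓑`:
the difference in lengths of two parabolic paths agreeing off a compact set can be
computed locally. -/
theorem parLen_diff_local
    (B : ℕ → ℝ → ℝ) (hB : ∀ i : ℕ, Continuous (B i)) (S : ℝ → ℝ → ℝ)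
    (hsheet : ∀ (x w₁ w₂ : ℝ), 0 ≤ x → w₁ < w₂ →
      ∀ τ : ℝ → ℕ, IsParabolicPath x w₁ τ →
        Tendsto (fun y : ℝ => finLPP B (τ y) y w₁ - finLPP B (τ y) y w₂) atBot
          (nhds (S x w₁ - S x w₂)))
    (x z₁ z₂ z₀ : ℝ) (hx : 0 ≤ x) (hz₀ : z₀ < min z₁ z₂)
    (π₁ π₂ : ℝ → ℕ)
    (h₁ : IsParabolicPath x z₁ π₁) (h₂ : IsParabolicPath x z₂ π₂)
    (hagree : ∀ y : ℝ, y ≤ z₀ → π₁ y = π₂ y) :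
    parLen B S x z₁ π₁ - ((restLen B π₁ z₀ z₁ : ℝ) : EReal) =
      parLen B S x z₂ π₂ - ((restLen B π₂ z₀ z₂ : ℝ) : EReal) := by
  have hz₀1 : z₀ < z₁ := lt_of_lt_of_le hz₀ (min_le_left _ _)
  have hz₀2 : z₀ < z₂ := lt_of_lt_of_le hz₀ (min_le_right _ _)
  set c₁ := restLen B π₁ z₀ z₁ with hc₁
  set c₂ := restLen B π₂ z₀ z₂ with hc₂
  -- convergence of the difference of finite LPP values
  have htend : Tendsto (fun y : ℝ => finLPP B (π₁ y) y z₁ - finLPP B (π₁ y) y z₂) atBot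
      (nhds (S x z₁ - S x z₂)) := by
    rcases lt_trichotomy z₁ z₂ with h | h | h
    · exact hsheet x z₁ z₂ hx h π₁ h₁
    · subst h
      simp only [sub_self]
      exact tendsto_const_nhds
    · have h0 := (hsheet x z₂ z₁ hx h π₂ h₂).neg
      rw [neg_sub] at h0
      refine h0.congr' ?_
      filter_upwards [eventually_le_atBot z₀] with y hy
      rw [hagree y hy]
      ring
  -- eventual relation between the two discrepancies
  have hdisc : ∀ᶠ y in atBot, disc B π₁ z₁ y = disc B π₂ z₂ y +
      ((c₁ - c₂) - (finLPP B (π₁ y) y z₁ - finLPP B (π₁ y) y z₂)) := by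
    filter_upwards [eventually_le_atBot z₀] with y hy
    have e₁ := restLen_split B h₁ hy hz₀1
    have e₂ := restLen_split B h₂ hy hz₀2
    have hy' : π₁ y = π₂ y := hagree y hy
    have hz' : π₁ z₀ = π₂ z₀ := hagree z₀ le_rfl
    have hjump : ∀ i : ℕ, jumpTime π₁ y z₀ i = jumpTime π₂ y z₀ i :=
      jumpTime_congr hagree hy
    have hlocal : (B (π₁ z₀) z₀ - B (π₁ z₀) (jumpTime π₁ y z₀ (π₁ z₀ + 1))) +
          ∑ i ∈ Finset.Ioc (π₁ z₀) (π₁ y),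
            (B i (jumpTime π₁ y z₀ i) - B i (jumpTime π₁ y z₀ (i + 1)))
        = (B (π₂ z₀) z₀ - B (π₂ z₀) (jumpTime π₂ y z₀ (π₂ z₀ + 1))) +
          ∑ i ∈ Finset.Ioc (π₂ z₀) (π₂ y),
            (B i (jumpTime π₂ y z₀ i) - B i (jumpTime π₂ y z₀ (i + 1))) := by
      rw [hz', hy']
      simp_rw [hjump]
    rw [disc, disc, e₁, e₂, hlocal, hy', ← hc₁, ← hc₂]
    ring
  -- relation between the two liminfs
  have hL : Filter.liminf (fun y : ℝ => ((disc B π₁ z₁ y : ℝ) : EReal)) atBot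
      = Filter.liminf (fun y : ℝ => ((disc B π₂ z₂ y : ℝ) : EReal)) atBot
        + (((c₁ - c₂) - (S x z₁ - S x z₂) : ℝ) : EReal) := by
    rw [← liminf_coe_add_tendsto (fun y => disc B π₂ z₂ y)
      (fun y => (c₁ - c₂) - (finLPP B (π₁ y) y z₁ - finLPP B (π₁ y) y z₂))
      ((c₁ - c₂) - (S x z₁ - S x z₂)) (tendsto_const_nhds.sub htend)]
    exact liminf_congr (hdisc.mono fun y hy => by rw [hy])
  rw [parLen, parLen, hL]
  set L := Filter.liminf (fun y : ℝ => ((disc B π₂ z₂ y : ℝ) : EReal)) atBot with hLdef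
  clear_value L
  induction L using EReal.rec with
  | bot =>
    simp only [EReal.bot_add, EReal.add_bot, EReal.bot_sub]
  | coe r =>
    rw [← EReal.coe_add, ← EReal.coe_add, ← EReal.coe_add, ← EReal.coe_sub, ← EReal.coe_sub]
    rw [EReal.coe_eq_coe_iff]
    ring
  | top =>
    simp only [EReal.coe_add_top, EReal.top_add_coe, EReal.top_sub_coe]

end ParabolicLPP
end
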